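/- arXiv:2503.16341 — 2 statements merged into one kernel-verified Lean document; each statement's English description precedes it below -/
import Mathlib

section
/- Let H and K be complex inner product spaces with dim(H) ≥ 2, and let T : H → K be a real-linear isometry preserving orthogonality. Then the following statements are equivalent: (a) T is complex-linear or conjugate-linear; (b) for every non-zero z ∈ H, T(i z) ∈ {i T(z), -i T(z)}; (c) there exists a non-zero z ∈ H with T(i z) ∈ {i T(z), -i T(z)}; (d) there exists a non-zero x₀ ∈ H such that i T(x₀) ∈ T(H). -/
/-!
Write `q(x) = Im ⟪T x, T (i x)⟫` (`twist T x`). Since `T` is a real isometry,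
`‖T (i x) ∓ i T x‖² = 2‖x‖² ∓ 2 q(x)`, so `T (i x) = ± i T x` exactly when `q(x) = ±‖x‖²`.
Real-linearity gives `q(α x) = |α|² q(x)`, and preservation of orthogonality kills the cross terms
of `q(u + v)` for `u ⊥ v`; splitting `y` along `x` and `x^⊥` then shows that `q(x) / ‖x‖²` is
constant, so a single instance of (c) forces the same sign everywhere, which is (a).
For (d), if `T y = i T x`, comparing real inner products gives `Im ⟪x, y⟫ = q(x)`, while `T x` is
orthogonal to the image of the component of `y` orthogonal to `x`, which gives
`‖x‖⁴ = Im ⟪x, y⟫ q(x)`; hence `q(x) = ±‖x‖²`.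
-/

open scoped ComplexInnerProductSpace
open Complex (I)

section

variable {H K : Type*} [NormedAddCommGroup H] [InnerProductSpace ℂ H]
    [NormedAddCommGroup K] [InnerProductSpace ℂ K]

noncomputable def twist (T : H → K) (x : H) : ℝ := (⟪T x, T (I • x)⟫).im

theorem exists_eq_smul_add_of_inner_eq_zero (x y : H) :
    ∃ (α : ℂ) (w : H), y = α • x + w ∧ ⟪x, w⟫ = 0 := by
  obtain ⟨u, hu, w, hw, rfl⟩ := (ℂ ∙ x).exists_add_mem_mem_orthogonal y
  obtain ⟨α, rfl⟩ := Submodule.mem_span_singleton.1 hu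
  exact ⟨α, w, rfl, Submodule.mem_orthogonal_singleton_iff_inner_right.1 hw⟩

namespace LinearMap

variable (T : H →ₗ[ℝ] K)

theorem map_complex_smul (α : ℂ) (x : H) :
    T (α • x) = α.re • T x + α.im • T (I • x) := by
  rw [← map_smul, ← map_smul, ← map_add, ← Complex.coe_smul, ← Complex.coe_smul, smul_smul,
    ← add_smul, Complex.re_add_im]

theorem twist_smul (α : ℂ) (x : H) : twist T (α • x) = ‖α‖ ^ 2 * twist T x := by
  have hIα : T (I • α • x) = α.re • T (I • x) - α.im • T x := by
    rw [smul_comm, map_complex_smul, smul_smul, Complex.I_mul_I, neg_one_smul, map_neg, smul_neg,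
      ← sub_eq_add_neg]
  have hP := inner_self_im (𝕜 := ℂ) (T x)
  have hQ := inner_self_im (𝕜 := ℂ) (T (I • x))
  have hQP : (⟪T (I • x), T x⟫).im = -(⟪T x, T (I • x)⟫).im := by
    rw [← inner_conj_symm, Complex.conj_im]
  simp only [RCLike.im_to_complex] at hP hQ
  rw [twist, twist, hIα, map_complex_smul]
  simp only [inner_add_left, inner_sub_right, ← Complex.coe_smul,
    inner_smul_left, inner_smul_right, Complex.conj_ofReal, Complex.add_im, Complex.sub_im,
    Complex.im_ofReal_mul, hP, hQ, hQP, Complex.sq_norm, Complex.normSq_apply]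
  ring

theorem map_smul_of_map_I_smul (h : ∀ x, T (I • x) = I • T x) (l : ℂ) (x : H) :
    T (l • x) = l • T x := by
  rw [map_complex_smul, h, ← Complex.coe_smul, ← Complex.coe_smul, smul_smul, ← add_smul,
    Complex.re_add_im]

theorem map_smul_of_map_I_smul_eq_neg (h : ∀ x, T (I • x) = -(I • T x)) (l : ℂ) (x : H) :
    T (l • x) = starRingEnd ℂ l • T x := by
  rw [map_complex_smul, h, smul_neg, ← neg_smul, ← Complex.coe_smul, ← Complex.coe_smul, smul_smul,
    ← add_smul]
  congr 1
  apply Complex.ext <;> simp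

variable {T} (hop : ∀ x y : H, ⟪x, y⟫ = 0 → ⟪T x, T y⟫ = 0)
include hop

theorem twist_add_of_inner_eq_zero {u v : H} (h : ⟪u, v⟫ = 0) :
    twist T (u + v) = twist T u + twist T v := by
  have huv : ⟪T u, T (I • v)⟫ = 0 := hop _ _ (by rw [inner_smul_right, h, mul_zero])
  have hvu : ⟪T v, T (I • u)⟫ = 0 :=
    hop _ _ (by rw [inner_smul_right, ← inner_conj_symm, h, map_zero, mul_zero])
  simp only [twist, smul_add, map_add, inner_add_left, inner_add_right, huv, hvu, Complex.add_im,
    Complex.zero_im, add_zero]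
  ring

theorem twist_mul_norm_sq_of_inner_eq_zero {x w : H} (h : ⟪x, w⟫ = 0) :
    twist T x * ‖w‖ ^ 2 = twist T w * ‖x‖ ^ 2 := by
  set a : ℂ := (‖w‖ : ℂ)
  set b : ℂ := (‖x‖ : ℂ)
  have hwx : ⟪w, x⟫ = 0 := by rw [← inner_conj_symm, h, map_zero]
  have hab : ∀ c : ℂ, ⟪a • x, c • w⟫ = 0 := fun c => by
    rw [inner_smul_left, inner_smul_right, h, mul_zero, mul_zero]
  have horth : ⟪a • x + b • w, a • x + (-b) • w⟫ = 0 := by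
    simp only [inner_add_left, inner_add_right, inner_smul_left, inner_smul_right, h, hwx,
      inner_self_eq_norm_sq_to_K, RCLike.ofReal_eq_complex_ofReal, a, b, Complex.conj_ofReal]
    ring
  have hsum : (a • x + b • w) + (a • x + (-b) • w) = (2 * a) • x := by
    module
  have key := twist_add_of_inner_eq_zero hop horth
  rw [hsum, twist_add_of_inner_eq_zero hop (hab _), twist_add_of_inner_eq_zero hop (hab _)] at key
  simp only [twist_smul, norm_neg, norm_mul, a, b, Complex.norm_real, norm_norm,
    Complex.norm_two] at key
  linear_combination key / 2

theorem twist_mul_norm_sq_comm (x y : H) : twist T x * ‖y‖ ^ 2 = twist T y * ‖x‖ ^ 2 := by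
  obtain ⟨α, w, rfl, h⟩ := exists_eq_smul_add_of_inner_eq_zero x y
  have hαw : ⟪α • x, w⟫ = 0 := by rw [inner_smul_left, h, mul_zero]
  have hpyth := norm_add_sq_eq_norm_sq_add_norm_sq_of_inner_eq_zero _ _ hαw
  rw [twist_add_of_inner_eq_zero hop hαw, twist_smul, sq, sq, hpyth, norm_smul]
  linear_combination twist_mul_norm_sq_of_inner_eq_zero hop h

theorem im_inner_map_map_mul_norm_sq (x y : H) :
    (⟪T x, T y⟫).im * ‖x‖ ^ 2 = (⟪x, y⟫).im * twist T x := by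
  obtain ⟨α, w, rfl, h⟩ := exists_eq_smul_add_of_inner_eq_zero x y
  have hP := inner_self_im (𝕜 := ℂ) (T x)
  simp only [RCLike.im_to_complex] at hP
  rw [map_add, map_complex_smul]
  simp only [inner_add_right, hop _ _ h, h, ← Complex.coe_smul, inner_smul_right, add_zero,
    Complex.add_im, Complex.im_ofReal_mul, hP, inner_self_eq_norm_sq_to_K (𝕜 := ℂ) x,
    RCLike.ofReal_eq_complex_ofReal, ← Complex.ofReal_pow, Complex.im_mul_ofReal, twist]
  ring

end LinearMap

namespace LinearIsometry

variable (T : H →ₗᵢ[ℝ] K)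

theorem re_inner_map_map (x y : H) : (⟪T x, T y⟫).re = (⟪x, y⟫).re := by
  have hT := norm_add_sq (𝕜 := ℂ) (T x) (T y)
  have h := norm_add_sq (𝕜 := ℂ) x y
  rw [← map_add, T.norm_map, T.norm_map, T.norm_map] at hT
  simp only [RCLike.re_to_complex] at hT h
  linarith

theorem re_inner_map_I_smul_I_smul_map (x : H) :
    (⟪T (I • x), I • T x⟫).re = twist T x := by
  rw [inner_smul_right, ← inner_conj_symm (T (I • x)), twist, Complex.mul_re, Complex.conj_re,
    Complex.conj_im, Complex.I_re, Complex.I_im]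
  ring

theorem map_I_smul_eq_iff (x : H) : T (I • x) = I • T x ↔ twist T x = ‖x‖ ^ 2 := by
  have h := norm_sub_sq (𝕜 := ℂ) (T (I • x)) (I • T x)
  simp only [T.norm_map, norm_smul, Complex.norm_I, one_mul, RCLike.re_to_complex,
    re_inner_map_I_smul_I_smul_map] at h
  rw [← sub_eq_zero, ← norm_eq_zero, ← pow_eq_zero_iff two_ne_zero, h]
  constructor <;> intro <;> linarith

theorem map_I_smul_eq_neg_iff (x : H) : T (I • x) = -(I • T x) ↔ twist T x = -‖x‖ ^ 2 := by
  have h := norm_add_sq (𝕜 := ℂ) (T (I • x)) (I • T x)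
  simp only [T.norm_map, norm_smul, Complex.norm_I, one_mul, RCLike.re_to_complex,
    re_inner_map_I_smul_I_smul_map] at h
  rw [← add_eq_zero_iff_eq_neg, ← norm_eq_zero, ← pow_eq_zero_iff two_ne_zero, h]
  constructor <;> intro <;> linarith

variable {T} (hop : ∀ x y : H, ⟪x, y⟫ = 0 → ⟪T x, T y⟫ = 0)
include hop

theorem twist_eq_mul_norm_sq {z : H} (hz : z ≠ 0) {c : ℝ} (h : twist T z = c * ‖z‖ ^ 2) (x : H) :
    twist T x = c * ‖x‖ ^ 2 := by
  have hcomm := T.toLinearMap.twist_mul_norm_sq_comm hop x z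
  rw [LinearIsometry.coe_toLinearMap, h] at hcomm
  refine mul_right_cancel₀ (pow_ne_zero 2 (norm_ne_zero_iff.2 hz)) ?_
  linear_combination hcomm

theorem map_I_smul_eq_of_ne_zero {z : H} (hz : z ≠ 0) (h : T (I • z) = I • T z) (x : H) :
    T (I • x) = I • T x := by
  rw [map_I_smul_eq_iff] at h ⊢
  simpa using twist_eq_mul_norm_sq hop hz (c := 1) (by rw [h, one_mul]) x

theorem map_I_smul_eq_neg_of_ne_zero {z : H} (hz : z ≠ 0) (h : T (I • z) = -(I • T z)) (x : H) :
    T (I • x) = -(I • T x) := by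
  rw [map_I_smul_eq_neg_iff] at h ⊢
  simpa using twist_eq_mul_norm_sq hop hz (c := -1) (by rw [h, neg_one_mul]) x

theorem twist_sq_of_map_eq_I_smul_map {x y : H} (hy : T y = I • T x) :
    twist T x ^ 2 = (‖x‖ ^ 2) ^ 2 := by
  have him : (⟪x, y⟫).im = twist T x := by
    have h := T.re_inner_map_map (I • x) y
    rw [hy, re_inner_map_I_smul_I_smul_map, inner_smul_left, Complex.conj_I] at h
    simpa using h.symm
  have h := T.toLinearMap.im_inner_map_map_mul_norm_sq hop x y
  rw [LinearIsometry.coe_toLinearMap, hy, him, inner_smul_right, inner_self_eq_norm_sq_to_K,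
    T.norm_map] at h
  simp only [RCLike.ofReal_eq_complex_ofReal, ← Complex.ofReal_pow, Complex.I_mul_im,
    Complex.ofReal_re] at h
  linear_combination -h

theorem map_I_smul_eq_or_of_map_eq_I_smul_map {x y : H} (hy : T y = I • T x) :
    T (I • x) = I • T x ∨ T (I • x) = -(I • T x) := by
  rw [map_I_smul_eq_iff, map_I_smul_eq_neg_iff, ← sq_eq_sq_iff_eq_or_eq_neg]
  exact twist_sq_of_map_eq_I_smul_map hop hy

end LinearIsometry
end

/-- Characterization of complex-linearity/conjugate-linearity for a real-linear
isometry `T` preserving orthogonality between complex inner product spaces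
(`dim H ≥ 2`): (a) `T` is complex-linear or conjugate-linear ↔ (b) every non-zero
`z` satisfies `T(iz) ∈ {i T z, -i T z}` ↔ (c) some non-zero `z` does ↔ (d) some
non-zero `x₀` has `i T(x₀) ∈ T(H)`. -/
theorem characterization_complexLinear_isometry_op
    {H K : Type*} [NormedAddCommGroup H] [InnerProductSpace ℂ H]
    [NormedAddCommGroup K] [InnerProductSpace ℂ K]
    (hdim : 2 ≤ Module.rank ℂ H)
    (T : H → K)
    (hadd : ∀ x y, T (x + y) = T x + T y)
    (hsmul : ∀ (r : ℝ) (x : H), T (r • x) = r • T x)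
    (hiso : ∀ x, ‖T x‖ = ‖x‖)
    (hop : ∀ x y : H, ⟪x, y⟫ = 0 → ⟪T x, T y⟫ = 0) :
    (((∀ (l : ℂ) (x : H), T (l • x) = l • T x) ∨
        (∀ (l : ℂ) (x : H), T (l • x) = (starRingEnd ℂ l) • T x)) ↔
      (∀ z : H, z ≠ 0 →
        T (Complex.I • z) = Complex.I • T z ∨ T (Complex.I • z) = -(Complex.I • T z))) ∧
    ((∀ z : H, z ≠ 0 →
        T (Complex.I • z) = Complex.I • T z ∨ T (Complex.I • z) = -(Complex.I • T z)) ↔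
      (∃ z : H, z ≠ 0 ∧
        (T (Complex.I • z) = Complex.I • T z ∨ T (Complex.I • z) = -(Complex.I • T z)))) ∧
    ((∃ z : H, z ≠ 0 ∧
        (T (Complex.I • z) = Complex.I • T z ∨ T (Complex.I • z) = -(Complex.I • T z))) ↔
      (∃ x₀ : H, x₀ ≠ 0 ∧ Complex.I • T x₀ ∈ Set.range T)) := by
  have : Nontrivial H := rank_pos_iff_nontrivial.mp (lt_of_lt_of_le (by norm_num) hdim)
  obtain ⟨x₁, hx₁⟩ := exists_ne (0 : H)
  let T' : H →ₗᵢ[ℝ] K := ⟨⟨⟨T, hadd⟩, hsmul⟩, hiso⟩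
  have c_to_a : (∃ z : H, z ≠ 0 ∧ (T (I • z) = I • T z ∨ T (I • z) = -(I • T z))) →
      (∀ (l : ℂ) (x : H), T (l • x) = l • T x) ∨
        (∀ (l : ℂ) (x : H), T (l • x) = (starRingEnd ℂ l) • T x) := by
    rintro ⟨z, hz, h | h⟩
    · exact .inl (T'.toLinearMap.map_smul_of_map_I_smul (T'.map_I_smul_eq_of_ne_zero hop hz h))
    · exact .inr (T'.toLinearMap.map_smul_of_map_I_smul_eq_neg
        (T'.map_I_smul_eq_neg_of_ne_zero hop hz h))
  have a_to_b : ((∀ (l : ℂ) (x : H), T (l • x) = l • T x) ∨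
        (∀ (l : ℂ) (x : H), T (l • x) = (starRingEnd ℂ l) • T x)) →
      ∀ z : H, z ≠ 0 → T (I • z) = I • T z ∨ T (I • z) = -(I • T z) := by
    rintro (h | h) z -
    · exact .inl (h I z)
    · exact .inr (by rw [h, Complex.conj_I, neg_smul])
  refine ⟨⟨a_to_b, fun hb => c_to_a ⟨x₁, hx₁, hb x₁ hx₁⟩⟩,
    ⟨fun hb => ⟨x₁, hx₁, hb x₁ hx₁⟩, fun hc => a_to_b (c_to_a hc)⟩, ⟨?_, ?_⟩⟩
  · rintro ⟨z, hz, h | h⟩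
    · exact ⟨z, hz, I • z, h⟩
    · refine ⟨z, hz, -(I • z), ?_⟩
      rw [show T (-(I • z)) = -T (I • z) from T'.map_neg _, h, neg_neg]
  · rintro ⟨x, hx, y, hy⟩
    exact ⟨x, hx, T'.map_I_smul_eq_or_of_map_eq_I_smul_map hop hy⟩
end

section
/- Let H and K be complex inner product spaces with dim(H) ≥ 2, and let T : H → K be a real-linear isometry preserving orthogonality. Then the following statements are equivalent: (a) T is neither complex-linear nor conjugate-linear; (b) for every non-zero z ∈ H, T(i z) ∉ {i T(z), -i T(z)}; (c) there exists a non-zero z ∈ H with T(i z) ∉ {i T(z), -i T(z)}; (d) there exists a non-zero x₀ ∈ H such that i T(x₀) ∉ T(H). -/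
/-!
Orthogonality preservation forces `Im ⟪T x, T y⟫ = L * Im ⟪x, y⟫` for one real constant `L`:
splitting `y = c • x + p` with `p ⟂ x` shows `Im ⟪T x, T y⟫ / Im ⟪x, y⟫` depends only on `x`,
and antisymmetry of both sides makes it independent of `x` too. Then
`‖T (I • z) ∓ I • T z‖² = 2 (1 ∓ L) ‖z‖²`, so `T (I • z) = ± I • T z` for one, or for every,
`z ≠ 0` exactly when `L = ±1`, which is also complex- resp. conjugate-linearity of `T`. Finally
`T y = I • T z` gives `‖z‖² = L * Im ⟪z, y⟫ ≤ |L| ‖z‖²`, while `|L| ≤ 1`, so `|L| = 1`.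
-/

open scoped ComplexInnerProductSpace
open Complex

section

variable {E H K : Type*} [AddCommGroup E] [Module ℂ E]
  [NormedAddCommGroup H] [InnerProductSpace ℂ H] [NormedAddCommGroup K] [InnerProductSpace ℂ K]

theorem complex_smul_eq_re_smul_add_im_smul (c : ℂ) (x : E) :
    c • x = c.re • x + c.im • (I • x) := by
  rw [← Complex.coe_smul, ← Complex.coe_smul, smul_smul, ← add_smul, re_add_im]

theorem LinearMap.forall_map_complex_smul_iff (T : H →ₗ[ℝ] K) :
    (∀ (l : ℂ) (x : H), T (l • x) = l • T x) ↔ ∀ x, T (I • x) = I • T x := by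
  refine ⟨fun h x => h I x, fun h l x => ?_⟩
  rw [complex_smul_eq_re_smul_add_im_smul l x, map_add, map_smul, map_smul, h,
    ← complex_smul_eq_re_smul_add_im_smul]

theorem LinearMap.forall_map_complex_smul_eq_conj_iff (T : H →ₗ[ℝ] K) :
    (∀ (l : ℂ) (x : H), T (l • x) = starRingEnd ℂ l • T x) ↔ ∀ x, T (I • x) = -(I • T x) := by
  refine ⟨fun h x => by rw [h, conj_I, neg_smul], fun h l x => ?_⟩
  rw [complex_smul_eq_re_smul_add_im_smul l x, map_add, map_smul, map_smul, h,
    complex_smul_eq_re_smul_add_im_smul (starRingEnd ℂ l), conj_re, conj_im, neg_smul, smul_neg]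

theorem im_inner_I_smul_right (x y : H) : (⟪x, I • y⟫).im = (⟪x, y⟫).re := by
  simp

theorem re_inner_I_smul_right (x y : H) : (⟪x, I • y⟫).re = -(⟪x, y⟫).im := by
  simp

def PreservesOrthogonality (T : H → K) : Prop :=
  ∀ x y : H, ⟪x, y⟫ = 0 → ⟪T x, T y⟫ = 0

noncomputable def imScale (T : H →ₗ[ℝ] K) (x : H) : ℝ :=
  (⟪T x, T (I • x)⟫).im / ‖x‖ ^ 2

theorem imScale_neg (T : H →ₗ[ℝ] K) (x : H) : imScale T (-x) = imScale T x := by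
  simp [imScale]

namespace PreservesOrthogonality

variable {T : H →ₗ[ℝ] K}

theorem im_inner_map_map_eq_imScale_mul (hT : PreservesOrthogonality T) (x y : H) :
    (⟪T x, T y⟫).im = imScale T x * (⟪x, y⟫).im := by
  rcases eq_or_ne x 0 with rfl | hx
  · simp
  have hx2 : ‖x‖ ^ 2 ≠ 0 := by positivity
  set c : ℂ := ⟪x, y⟫ / (‖x‖ ^ 2 : ℝ)
  have hxy : ⟪x, y⟫ = c * (‖x‖ ^ 2 : ℝ) := by
    rw [div_mul_cancel₀ _ (ofReal_ne_zero.mpr hx2)]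
  have horth : ⟪x, y - c • x⟫ = 0 := by
    rw [inner_sub_right, inner_smul_right, inner_self_eq_norm_sq_to_K, hxy, sub_eq_zero]
    norm_cast
  calc (⟪T x, T y⟫).im = (⟪T x, T (c • x)⟫).im := by
        conv_lhs => rw [← add_sub_cancel (c • x) y]
        rw [map_add, inner_add_right, hT _ _ horth, add_zero]
    _ = c.im * (⟪T x, T (I • x)⟫).im := by
        rw [complex_smul_eq_re_smul_add_im_smul, map_add, map_smul, map_smul, inner_add_right,
          ← Complex.coe_smul, ← Complex.coe_smul, inner_smul_right, inner_smul_right]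
        simp [← ofReal_pow]
    _ = imScale T x * (⟪x, y⟫).im := by
        rw [imScale, hxy, mul_im, ofReal_re, ofReal_im]
        field_simp
        ring

theorem imScale_eq_of_im_inner_ne_zero (hT : PreservesOrthogonality T) {x y : H}
    (h : (⟪x, y⟫).im ≠ 0) : imScale T x = imScale T y := by
  have hyx := hT.im_inner_map_map_eq_imScale_mul y x
  rw [← inner_conj_symm (T y), conj_im, ← inner_conj_symm y, conj_im,
    hT.im_inner_map_map_eq_imScale_mul] at hyx
  exact mul_right_cancel₀ h (by linarith)

theorem imScale_eq (hT : PreservesOrthogonality T) {x y : H} (hx : x ≠ 0) (hy : y ≠ 0) :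
    imScale T x = imScale T y := by
  wlog hxy : 0 ≤ (⟪x, y⟫).re generalizing y
  · rw [← imScale_neg T y]
    exact this (neg_ne_zero.mpr hy) (by rw [inner_neg_right, neg_re]; linarith)
  -- Once `0 ≤ Re ⟪x, y⟫`, the vector `I • (x + y)` has non-real inner product with `x` and `y`.
  have hxx : 0 < (⟪x, x⟫).re := re_inner_self_pos (𝕜 := ℂ) |>.mpr hx
  have hyy : 0 < (⟪y, y⟫).re := re_inner_self_pos (𝕜 := ℂ) |>.mpr hy
  have hxw : (⟪x, I • (x + y)⟫).im ≠ 0 := by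
    rw [im_inner_I_smul_right, inner_add_right, add_re]
    positivity
  have hyw : (⟪y, I • (x + y)⟫).im ≠ 0 := by
    rw [im_inner_I_smul_right, inner_add_right, add_re, ← inner_conj_symm y x, conj_re]
    positivity
  exact (hT.imScale_eq_of_im_inner_ne_zero hxw).trans (hT.imScale_eq_of_im_inner_ne_zero hyw).symm

theorem exists_im_inner_map_map_eq (hT : PreservesOrthogonality T) :
    ∃ L : ℝ, ∀ x y, (⟪T x, T y⟫).im = L * (⟪x, y⟫).im := by
  rcases subsingleton_or_nontrivial H with hH | hH
  · exact ⟨0, fun x y => by simp [Subsingleton.elim x 0]⟩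
  obtain ⟨z, hz⟩ := exists_ne (0 : H)
  refine ⟨imScale T z, fun x y => ?_⟩
  rcases eq_or_ne x 0 with rfl | hx
  · simp
  rw [hT.im_inner_map_map_eq_imScale_mul, hT.imScale_eq hx hz]

end PreservesOrthogonality

namespace LinearIsometry

variable {f : H →ₗᵢ[ℝ] K} {L : ℝ}

theorem re_inner_map_I_smul_I_smul_map_s7 (hL : ∀ x y, (⟪f x, f y⟫).im = L * (⟪x, y⟫).im)
    (z : H) : (⟪f (I • z), I • f z⟫).re = L * ‖z‖ ^ 2 := by
  rw [re_inner_I_smul_right, hL, inner_smul_left, conj_I]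
  simp [← ofReal_pow]

theorem norm_map_I_smul_sub_sq (hL : ∀ x y, (⟪f x, f y⟫).im = L * (⟪x, y⟫).im) (z : H) :
    ‖f (I • z) - I • f z‖ ^ 2 = 2 * (1 - L) * ‖z‖ ^ 2 := by
  rw [@norm_sub_sq ℂ, RCLike.re_to_complex, re_inner_map_I_smul_I_smul_map_s7 hL, norm_smul, norm_I,
    one_mul, f.norm_map, f.norm_map, norm_smul, norm_I, one_mul]
  ring

theorem norm_map_I_smul_add_sq (hL : ∀ x y, (⟪f x, f y⟫).im = L * (⟪x, y⟫).im) (z : H) :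
    ‖f (I • z) + I • f z‖ ^ 2 = 2 * (1 + L) * ‖z‖ ^ 2 := by
  rw [@norm_add_sq ℂ, RCLike.re_to_complex, re_inner_map_I_smul_I_smul_map_s7 hL, norm_smul, norm_I,
    one_mul, f.norm_map, f.norm_map, norm_smul, norm_I, one_mul]
  ring

theorem map_I_smul_eq_iff_s7 (hL : ∀ x y, (⟪f x, f y⟫).im = L * (⟪x, y⟫).im) {z : H} (hz : z ≠ 0) :
    f (I • z) = I • f z ↔ L = 1 := by
  rw [← sub_eq_zero, ← norm_eq_zero, ← sq_eq_zero_iff, norm_map_I_smul_sub_sq hL]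
  simp [hz, sub_eq_zero, eq_comm (a := (1 : ℝ))]

theorem map_I_smul_eq_neg_iff_s7 (hL : ∀ x y, (⟪f x, f y⟫).im = L * (⟪x, y⟫).im) {z : H}
    (hz : z ≠ 0) : f (I • z) = -(I • f z) ↔ L = -1 := by
  rw [eq_neg_iff_add_eq_zero, ← norm_eq_zero, ← sq_eq_zero_iff, norm_map_I_smul_add_sq hL]
  simp [hz, add_eq_zero_iff_eq_neg']

theorem abs_le_one (hL : ∀ x y, (⟪f x, f y⟫).im = L * (⟪x, y⟫).im) [Nontrivial H] :
    |L| ≤ 1 := by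
  obtain ⟨z, hz⟩ := exists_ne (0 : H)
  have hz2 : 0 < ‖z‖ ^ 2 := by positivity
  have hsub := norm_map_I_smul_sub_sq hL z
  have hadd := norm_map_I_smul_add_sq hL z
  refine abs_le.mpr ⟨?_, ?_⟩ <;> nlinarith [sq_nonneg ‖f (I • z) - I • f z‖,
    sq_nonneg ‖f (I • z) + I • f z‖]

theorem abs_eq_one_of_map_eq_I_smul_map (hL : ∀ x y, (⟪f x, f y⟫).im = L * (⟪x, y⟫).im)
    {y z : H} (hz : z ≠ 0) (hy : f y = I • f z) : |L| = 1 := by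
  have : Nontrivial H := ⟨⟨z, 0, hz⟩⟩
  have hyz : ‖y‖ = ‖z‖ := by rw [← f.norm_map, hy, norm_smul, norm_I, one_mul, f.norm_map]
  have hzy : ‖z‖ ^ 2 = L * (⟪z, y⟫).im := by
    rw [← hL, hy, im_inner_I_smul_right, ← f.norm_map]
    exact (inner_self_eq_norm_sq (𝕜 := ℂ) (f z)).symm
  have him : |(⟪z, y⟫).im| ≤ ‖z‖ ^ 2 :=
    (abs_im_le_norm _).trans ((norm_inner_le_norm z y).trans_eq (by rw [hyz, sq]))
  have hz2 : 0 < ‖z‖ ^ 2 := by positivity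
  have hLz : ‖z‖ ^ 2 = |L| * |(⟪z, y⟫).im| := by rw [← abs_mul, ← hzy, abs_of_pos hz2]
  refine le_antisymm (abs_le_one hL) ?_
  nlinarith [abs_nonneg L]

theorem forall_map_I_smul_eq_iff (hL : ∀ x y, (⟪f x, f y⟫).im = L * (⟪x, y⟫).im)
    [Nontrivial H] : (∀ z, f (I • z) = I • f z) ↔ L = 1 := by
  obtain ⟨z₀, hz₀⟩ := exists_ne (0 : H)
  refine ⟨fun h => (map_I_smul_eq_iff_s7 hL hz₀).mp (h z₀), fun h z => ?_⟩
  rcases eq_or_ne z 0 with rfl | hz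
  · simp
  · exact (map_I_smul_eq_iff_s7 hL hz).mpr h

theorem forall_map_I_smul_eq_neg_iff (hL : ∀ x y, (⟪f x, f y⟫).im = L * (⟪x, y⟫).im)
    [Nontrivial H] : (∀ z, f (I • z) = -(I • f z)) ↔ L = -1 := by
  obtain ⟨z₀, hz₀⟩ := exists_ne (0 : H)
  refine ⟨fun h => (map_I_smul_eq_neg_iff_s7 hL hz₀).mp (h z₀), fun h z => ?_⟩
  rcases eq_or_ne z 0 with rfl | hz
  · simp
  · exact (map_I_smul_eq_neg_iff_s7 hL hz).mpr h

theorem exists_I_smul_map_notMem_range_iff (hL : ∀ x y, (⟪f x, f y⟫).im = L * (⟪x, y⟫).im)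
    [Nontrivial H] : (∃ x₀, x₀ ≠ 0 ∧ I • f x₀ ∉ Set.range f) ↔ ¬(L = 1 ∨ L = -1) := by
  refine ⟨?_, fun h => ?_⟩
  · rintro ⟨x₀, hx₀, hx₀f⟩ (h | h)
    · exact hx₀f ⟨I • x₀, (map_I_smul_eq_iff_s7 hL hx₀).mpr h⟩
    · exact hx₀f ⟨-(I • x₀), by rw [map_neg, (map_I_smul_eq_neg_iff_s7 hL hx₀).mpr h, neg_neg]⟩
  · obtain ⟨z₀, hz₀⟩ := exists_ne (0 : H)
    exact ⟨z₀, hz₀, fun ⟨y, hy⟩ =>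
      h ((abs_eq zero_le_one).mp (abs_eq_one_of_map_eq_I_smul_map hL hz₀ hy))⟩

end LinearIsometry

end

/-- Characterization of the failure of complex-linearity/conjugate-linearity for a
real-linear isometry `T` preserving orthogonality between complex inner product
spaces (`dim H ≥ 2`): (a) `T` is neither complex-linear nor conjugate-linear ↔
(b) every non-zero `z` satisfies `T(iz) ∉ {i T z, -i T z}` ↔ (c) some non-zero `z`
does ↔ (d) some non-zero `x₀` has `i T(x₀) ∉ T(H)`. -/
theorem characterization_not_complexLinear_isometry_op
    {H K : Type*} [NormedAddCommGroup H] [InnerProductSpace ℂ H]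
    [NormedAddCommGroup K] [InnerProductSpace ℂ K]
    (hdim : 2 ≤ Module.rank ℂ H)
    (T : H → K)
    (hadd : ∀ x y, T (x + y) = T x + T y)
    (hsmul : ∀ (r : ℝ) (x : H), T (r • x) = r • T x)
    (hiso : ∀ x, ‖T x‖ = ‖x‖)
    (hop : ∀ x y : H, ⟪x, y⟫ = 0 → ⟪T x, T y⟫ = 0) :
    ((¬ (∀ (l : ℂ) (x : H), T (l • x) = l • T x) ∧
        ¬ (∀ (l : ℂ) (x : H), T (l • x) = (starRingEnd ℂ l) • T x)) ↔
      (∀ z : H, z ≠ 0 →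
        ¬ (T (Complex.I • z) = Complex.I • T z ∨ T (Complex.I • z) = -(Complex.I • T z)))) ∧
    ((∀ z : H, z ≠ 0 →
        ¬ (T (Complex.I • z) = Complex.I • T z ∨ T (Complex.I • z) = -(Complex.I • T z))) ↔
      (∃ z : H, z ≠ 0 ∧
        ¬ (T (Complex.I • z) = Complex.I • T z ∨ T (Complex.I • z) = -(Complex.I • T z)))) ∧
    ((∃ z : H, z ≠ 0 ∧
        ¬ (T (Complex.I • z) = Complex.I • T z ∨ T (Complex.I • z) = -(Complex.I • T z))) ↔
      (∃ x₀ : H, x₀ ≠ 0 ∧ Complex.I • T x₀ ∉ Set.range T)) := by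
  have : Nontrivial H := rank_pos_iff_nontrivial.mp (lt_of_lt_of_le (by norm_num) hdim)
  obtain ⟨z₀, hz₀⟩ := exists_ne (0 : H)
  let f : H →ₗᵢ[ℝ] K := { toFun := T, map_add' := hadd, map_smul' := hsmul, norm_map' := hiso }
  obtain ⟨L, hL⟩ := PreservesOrthogonality.exists_im_inner_map_map_eq (T := f.toLinearMap) hop
  have hP z (hz : z ≠ 0) :=
    (or_congr (f.map_I_smul_eq_iff_s7 hL hz) (f.map_I_smul_eq_neg_iff_s7 hL hz)).not
  have ha := (and_congr
    (f.toLinearMap.forall_map_complex_smul_iff.trans (f.forall_map_I_smul_eq_iff hL)).not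
    (f.toLinearMap.forall_map_complex_smul_eq_conj_iff.trans
      (f.forall_map_I_smul_eq_neg_iff hL)).not).trans not_or.symm
  have hb := (forall₂_congr hP).trans ⟨fun h => h z₀ hz₀, fun h _ _ => h⟩
  have hc := (exists_congr fun z => and_congr_right (hP z)).trans
    ⟨fun ⟨_, _, h⟩ => h, fun h => ⟨z₀, hz₀, h⟩⟩
  exact ⟨ha.trans hb.symm, hb.trans hc.symm,
    hc.trans (f.exists_I_smul_map_notMem_range_iff hL).symm⟩
end
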